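/- arXiv:1210.7782 — 4 statements merged into one kernel-verified Lean document; each statement's English description precedes it below -/
import Mathlib

section
/- Let u : ℝ → ℝ be twice continuously differentiable with e^{-x} u(x) → 0 and e^{-x} u'(x) → 0 as x → +∞, and suppose e^{-ξ}(u(ξ) - u''(ξ)) is integrable on [x, ∞) for each x. Then for every x ∈ ℝ, u(x) + u'(x) = e^{x} ∫_{x}^{+∞} e^{-ξ} (u(ξ) - u''(ξ)) dξ. -/
open MeasureTheory Real Filter

/-!
With `g = u + u'` we have `g - g' = u - u''`, and `-e^{-ξ} g(ξ)` is an antiderivative of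
`e^{-ξ} (g(ξ) - g'(ξ))`. Since `e^{-ξ} g(ξ) → 0` at `+∞`, the improper integral over `[x, ∞)`
equals `e^{-x} g(x)`.
-/

theorem hasDerivAt_neg_exp_neg_mul {g : ℝ → ℝ} {g' : ℝ} {x : ℝ} (hg : HasDerivAt g g' x) :
    HasDerivAt (fun t => -(exp (-t) * g t)) (exp (-x) * (g x - g')) x := by
  have hexp : HasDerivAt (fun t => exp (-t)) (-exp (-x)) x := by
    simpa using (hasDerivAt_neg x).exp
  exact (hexp.mul hg).neg.congr_deriv (by ring)

theorem integral_Ici_exp_neg_mul_sub_deriv {g g' : ℝ → ℝ} (x : ℝ)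
    (hg : ∀ t, HasDerivAt g (g' t) t)
    (hlim : Tendsto (fun t => exp (-t) * g t) atTop (nhds 0))
    (hint : IntegrableOn (fun t => exp (-t) * (g t - g' t)) (Set.Ici x)) :
    ∫ t in Set.Ici x, exp (-t) * (g t - g' t) = exp (-x) * g x := by
  rw [integral_Ici_eq_integral_Ioi,
    integral_Ioi_of_hasDerivAt_of_tendsto' (fun t _ => hasDerivAt_neg_exp_neg_mul (hg t))
      (hint.mono_set Set.Ioi_subset_Ici_self) (by simpa using hlim.neg)]
  ring

theorem identity_u_plus_u'
    (u : ℝ → ℝ) (hu : ContDiff ℝ 2 u)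
    (hlim : Tendsto (fun x => Real.exp (-x) * u x) atTop (nhds 0))
    (hlim' : Tendsto (fun x => Real.exp (-x) * deriv u x) atTop (nhds 0))
    (hint : ∀ x : ℝ, IntegrableOn
      (fun ξ => Real.exp (-ξ) * (u ξ - deriv (deriv u) ξ)) (Set.Ici x)) :
    ∀ x : ℝ, u x + deriv u x =
      Real.exp x * ∫ ξ in Set.Ici x, Real.exp (-ξ) * (u ξ - deriv (deriv u) ξ) := by
  intro x
  have hu' : Differentiable ℝ u := hu.differentiable (by norm_num)
  have hu'' : Differentiable ℝ (deriv u) :=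
    (hu.iterate_deriv' 1 1).differentiable (by norm_num)
  have hsum : ∀ t, HasDerivAt (fun t => u t + deriv u t) (deriv u t + deriv (deriv u) t) t :=
    fun t => (hu' t).hasDerivAt.add (hu'' t).hasDerivAt
  have hcancel : ∀ t, u t + deriv u t - (deriv u t + deriv (deriv u) t) =
      u t - deriv (deriv u) t := fun t => by ring
  have key := integral_Ici_exp_neg_mul_sub_deriv x hsum
    (by simpa only [mul_add, add_zero] using hlim.add hlim') (by simpa only [hcancel] using hint x)
  simp only [hcancel] at key
  rw [key, ← mul_assoc, ← exp_add, add_neg_cancel, exp_zero, one_mul]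
end

section
/- Let p(x) = (1/2)e^{-|x|} and let a ∈ ℝ. For any u ∈ H¹(ℝ) (so u is continuous and u, u' ∈ L²) and any x ∈ ℝ, the one-sided convolution satisfies ((p·1_{ℝ⁺}) * (a²u² + u'²))(x) ≥ (a/2) u(x)² - a ((p·1_{ℝ⁺}) * u²)(x), where (p·1_{ℝ⁺}) * f (x) = (e^{-x}/2) ∫_{-∞}^{x} e^{ξ} f(ξ) dξ. -/
open MeasureTheory Real Set Filter Topology

/-!
Integrating `(e^ξ u²)' = e^ξ (u² + 2uu')` over `(-∞, x]`, where `e^ξ u²` vanishes at `-∞`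
because `u²` and `(u²)' = 2uu'` are integrable, expresses `a (e^x u(x)² - ∫ e^ξ u²)` as
`∫ e^ξ · 2a u u'`. The pointwise bound `2 a u u' ≤ a² u² + u'²` then gives the claim after
multiplying by `e^{-x}/2`.
-/

lemma integrableOn_Iic_exp_mul {h : ℝ → ℝ} (hh : Integrable h) (x : ℝ) :
    IntegrableOn (fun ξ => exp ξ * h ξ) (Iic x) := by
  refine Integrable.mono' ((hh.abs.const_mul (exp x)).restrict)
    (continuous_exp.aestronglyMeasurable.mul hh.aestronglyMeasurable).restrict ?_
  filter_upwards [ae_restrict_mem measurableSet_Iic] with ξ hξ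
  rw [norm_eq_abs, abs_mul, abs_of_pos (exp_pos ξ)]
  exact mul_le_mul_of_nonneg_right (exp_le_exp.2 hξ) (abs_nonneg _)

lemma integral_Iic_exp_mul_two_mul_deriv {u : ℝ → ℝ} (hu : Differentiable ℝ u)
    (hu2 : MemLp u 2 volume) (hu'2 : MemLp (deriv u) 2 volume) (x : ℝ) :
    ∫ ξ in Iic x, exp ξ * (2 * u ξ * deriv u ξ) =
      exp x * u x ^ 2 - ∫ ξ in Iic x, exp ξ * u ξ ^ 2 := by
  have hsq : ∀ ξ, HasDerivAt (fun t => u t ^ 2) (2 * u ξ * deriv u ξ) ξ := fun ξ => by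
    simpa [mul_comm] using (hu ξ).hasDerivAt.fun_pow 2
  have hcross : Integrable (fun ξ => 2 * u ξ * deriv u ξ) := by
    simpa only [Pi.mul_apply, mul_assoc] using (hu2.integrable_mul hu'2).const_mul 2
  have hlim : Tendsto (fun ξ => exp ξ * u ξ ^ 2) atBot (𝓝 0) := by
    simpa using tendsto_exp_atBot.mul <| tendsto_zero_of_hasDerivAt_of_integrableOn_Iic (a := 0)
      (fun ξ _ => hsq ξ) hcross.integrableOn hu2.integrable_sq.integrableOn
  have hI := integrableOn_Iic_exp_mul hu2.integrable_sq x
  have hI' := integrableOn_Iic_exp_mul hcross x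
  have hftc := integral_Iic_of_hasDerivAt_of_tendsto'
    (fun ξ _ => (hasDerivAt_exp ξ).mul (hsq ξ)) (hI.add hI') hlim
  rw [integral_add hI hI', Pi.mul_apply, sub_zero] at hftc
  linarith

theorem one_sided_convolution_lower_bound
    (a : ℝ) (u : ℝ → ℝ) (hu : Differentiable ℝ u)
    (hu2 : MemLp u 2 volume) (hu'2 : MemLp (deriv u) 2 volume) :
    ∀ x : ℝ,
      (Real.exp (-x) / 2) * ∫ ξ in Set.Iic x, Real.exp ξ * (a^2 * u ξ^2 + deriv u ξ^2)
        ≥ (a/2) * u x^2 - a * ((Real.exp (-x) / 2) * ∫ ξ in Set.Iic x, Real.exp ξ * u ξ^2) := by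
  intro x
  have key : a * (exp x * u x ^ 2 - ∫ ξ in Iic x, exp ξ * u ξ ^ 2) ≤
      ∫ ξ in Iic x, exp ξ * (a ^ 2 * u ξ ^ 2 + deriv u ξ ^ 2) := by
    rw [← integral_Iic_exp_mul_two_mul_deriv hu hu2 hu'2, ← integral_const_mul]
    refine integral_mono ?_ (integrableOn_Iic_exp_mul
      ((hu2.integrable_sq.const_mul _).add hu'2.integrable_sq) x) fun ξ => ?_
    · exact (integrableOn_Iic_exp_mul ((hu2.integrable_mul hu'2).const_mul (2 * a)) x).congr_fun
        (fun ξ _ => by simp only [Pi.mul_apply]; ring) measurableSet_Iic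
    · have hamgm := two_mul_le_add_sq (a * u ξ) (deriv u ξ)
      nlinarith [exp_pos ξ]
  have hexp : exp (-x) * exp x = 1 := by rw [← exp_add, neg_add_cancel, exp_zero]
  have hscaled := mul_le_mul_of_nonneg_left key (by positivity : (0 : ℝ) ≤ exp (-x) / 2)
  linear_combination hscaled - a / 2 * u x ^ 2 * hexp
end

section
/- Let 0 ≤ γ ≤ 4, γ > 0, and set δ = (√γ/4)(√(12-3γ) - √γ). Let p(x) = (1/2)e^{-|x|}. Then for every u ∈ H¹(ℝ) with u' denoting the weak derivative, and for all x ∈ ℝ: (p * ((3-γ)/2 · u² + (γ/2) u'²))(x) ≥ δ u(x)². -/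
open MeasureTheory Real

noncomputable def p (x : ℝ) : ℝ := (1/2) * Real.exp (-|x|)

/-! Completing the square, `(3 - γ)/2 a² + γ/2 b² - δ (a² ± 2ab) = (δ a ∓ γ/2 b)² · 2/γ`, where the choice
of `δ` is exactly what makes the coefficient of `a²` vanish. On the half-line `y ≤ x` the kernel is
`p (x - y) = e^{y-x}/2` and `(u² + 2uu') e^{y-x}` is the derivative of `u² e^{y-x}`, so its integral
over `(-∞, x]` is `u(x)²` (the boundary term at `-∞` vanishes because `u² e^{y-x}` and its
derivative are both integrable); symmetrically on `[x, ∞)` with `(u² - 2uu') e^{x-y}`. Each half-line thus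
contributes at least `δ u(x)² / 2`. -/

open Set Filter

lemma four_mul_sq_add_two_mul_mul_eq {γ δ : ℝ} (hγ0 : 0 ≤ γ) (hγ4 : γ ≤ 4)
    (hδ : δ = (√γ / 4) * (√(12 - 3 * γ) - √γ)) :
    4 * δ ^ 2 + 2 * γ * δ = γ * (3 - γ) := by
  have hs : √γ ^ 2 = γ := sq_sqrt hγ0
  have ht : √(12 - 3 * γ) ^ 2 = 12 - 3 * γ := sq_sqrt (by linarith)
  rw [hδ]
  linear_combination (-(√γ * √(12 - 3 * γ)) / 2 + √γ ^ 2 / 4 + 3 - γ) * hs + (√γ ^ 2 / 4) * ht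

lemma mul_sq_add_two_mul_le {γ δ : ℝ} (hγ : 0 < γ) (h : 4 * δ ^ 2 + 2 * γ * δ = γ * (3 - γ))
    (a b : ℝ) : δ * (a ^ 2 + 2 * (a * b)) ≤ (3 - γ) / 2 * a ^ 2 + γ / 2 * b ^ 2 := by
  have hsq : γ * ((3 - γ) / 2 * a ^ 2 + γ / 2 * b ^ 2 - δ * (a ^ 2 + 2 * (a * b)))
      = 2 * (δ * a - γ / 2 * b) ^ 2 := by
    linear_combination (-(a ^ 2 / 2)) * h
  exact sub_nonneg.mp (nonneg_of_mul_nonneg_right (hsq ▸ by positivity) hγ)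

lemma MeasureTheory.Integrable.integrableOn_exp_mul {f g : ℝ → ℝ} {s : Set ℝ} (hf : Integrable f)
    (hs : MeasurableSet s) (hg : Continuous g) (hgs : ∀ y ∈ s, g y ≤ 0) :
    IntegrableOn (fun y => exp (g y) * f y) s := by
  refine hf.integrableOn.bdd_mul (c := 1) hg.rexp.aestronglyMeasurable
    ((ae_restrict_iff' hs).2 (ae_of_all _ fun y hy => ?_))
  rw [norm_eq_abs, abs_exp, exp_le_one_iff]
  exact hgs y hy

lemma integral_Iic_deriv_eq {g g' : ℝ → ℝ} {a : ℝ} (hg : ∀ y ∈ Iic a, HasDerivAt g (g' y) y)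
    (hgi : IntegrableOn g (Iic a)) (hg'i : IntegrableOn g' (Iic a)) :
    ∫ y in Iic a, g' y = g a := by
  simpa using integral_Iic_of_hasDerivAt_of_tendsto' hg hg'i
    (tendsto_zero_of_hasDerivAt_of_integrableOn_Iic hg hg'i hgi)

lemma integral_Ioi_deriv_eq {g g' : ℝ → ℝ} {a : ℝ} (hg : ∀ y ∈ Ici a, HasDerivAt g (g' y) y)
    (hgi : IntegrableOn g (Ioi a)) (hg'i : IntegrableOn g' (Ioi a)) :
    ∫ y in Ioi a, g' y = -g a := by
  simpa using integral_Ioi_of_hasDerivAt_of_tendsto' hg hg'i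
    (tendsto_zero_of_hasDerivAt_of_integrableOn_Ioi (fun y hy => hg y (mem_Ici_of_Ioi hy)) hg'i hgi)

lemma p_sub_of_le {x y : ℝ} (h : y ≤ x) : p (x - y) = exp (y - x) / 2 := by
  rw [p, abs_of_nonneg (sub_nonneg.mpr h), neg_sub]
  ring

lemma p_sub_of_ge {x y : ℝ} (h : x ≤ y) : p (x - y) = exp (x - y) / 2 := by
  rw [p, abs_of_nonpos (sub_nonpos.mpr h), neg_neg]
  ring

lemma MeasureTheory.Integrable.p_sub_mul {f : ℝ → ℝ} (hf : Integrable f) (x : ℝ) :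
    Integrable fun y => p (x - y) * f y := by
  have h := (hf.integrableOn_exp_mul MeasurableSet.univ (g := fun y => -|x - y|) (by fun_prop)
    fun y _ => neg_nonpos.mpr (abs_nonneg _)).const_mul (1 / 2)
  simpa only [Measure.restrict_univ, p, mul_assoc] using h

lemma MeasureTheory.Integrable.integrableOn_Iic_exp_sub_mul {f : ℝ → ℝ} (hf : Integrable f)
    (x : ℝ) : IntegrableOn (fun y => exp (y - x) * f y) (Iic x) :=
  hf.integrableOn_exp_mul measurableSet_Iic (continuous_sub_right x) fun _ hy => sub_nonpos.mpr hy

lemma MeasureTheory.Integrable.integrableOn_Ioi_exp_sub_mul {f : ℝ → ℝ} (hf : Integrable f)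
    (x : ℝ) : IntegrableOn (fun y => exp (x - y) * f y) (Ioi x) :=
  hf.integrableOn_exp_mul measurableSet_Ioi (continuous_sub_left x) fun _ hy => (sub_neg.mpr hy).le

section HalfLines

variable {u u' : ℝ → ℝ} (hu : ∀ y, HasDerivAt u (u' y) y)
  (hu_sq : Integrable fun y => u y ^ 2) (huu' : Integrable fun y => u y * u' y)
include hu hu_sq huu'

lemma integral_Iic_exp_sub_mul (x : ℝ) :
    ∫ y in Iic x, exp (y - x) * (u y ^ 2 + 2 * (u y * u' y)) = u x ^ 2 := by
  have hderiv : ∀ y ∈ Iic x, HasDerivAt (fun y => exp (y - x) * u y ^ 2)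
      (exp (y - x) * (u y ^ 2 + 2 * (u y * u' y))) y := fun y _ =>
    (((hasDerivAt_id y).sub_const x).exp.mul ((hu y).pow 2)).congr_deriv (by simp; ring)
  simpa using integral_Iic_deriv_eq hderiv (hu_sq.integrableOn_Iic_exp_sub_mul x)
    ((hu_sq.add (huu'.const_mul 2)).integrableOn_Iic_exp_sub_mul x)

lemma integral_Ioi_exp_sub_mul (x : ℝ) :
    ∫ y in Ioi x, exp (x - y) * (u y ^ 2 - 2 * (u y * u' y)) = u x ^ 2 := by
  have hderiv : ∀ y ∈ Ici x, HasDerivAt (fun y => -(exp (x - y) * u y ^ 2))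
      (exp (x - y) * (u y ^ 2 - 2 * (u y * u' y))) y := fun y _ =>
    (((hasDerivAt_id y).const_sub x).exp.mul ((hu y).pow 2)).neg.congr_deriv (by simp; ring)
  simpa using integral_Ioi_deriv_eq hderiv (hu_sq.integrableOn_Ioi_exp_sub_mul x).neg
    ((hu_sq.sub (huu'.const_mul 2)).integrableOn_Ioi_exp_sub_mul x)

end HalfLines

section KernelBound

variable {γ δ : ℝ} (hγ : 0 < γ) (hkey : 4 * δ ^ 2 + 2 * γ * δ = γ * (3 - γ))
  {u u' : ℝ → ℝ} (hu : ∀ y, HasDerivAt u (u' y) y) (hu_sq : Integrable fun y => u y ^ 2)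
  (huu' : Integrable fun y => u y * u' y)
  (hF : Integrable fun y => (3 - γ) / 2 * u y ^ 2 + γ / 2 * u' y ^ 2)
include hγ hkey hu hu_sq huu' hF

lemma mul_sq_le_setIntegral_Iic_p_sub_mul (x : ℝ) :
    δ / 2 * u x ^ 2 ≤ ∫ y in Iic x, p (x - y) * ((3 - γ) / 2 * u y ^ 2 + γ / 2 * u' y ^ 2) := by
  have hint := (hu_sq.add (huu'.const_mul 2)).integrableOn_Iic_exp_sub_mul x
  calc δ / 2 * u x ^ 2
      = ∫ y in Iic x, δ / 2 * (exp (y - x) * (u y ^ 2 + 2 * (u y * u' y))) := by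
        rw [integral_const_mul, integral_Iic_exp_sub_mul hu hu_sq huu']
    _ ≤ _ := by
      refine setIntegral_mono_on (hint.const_mul _) (hF.p_sub_mul x).integrableOn
        measurableSet_Iic fun y hy => ?_
      rw [p_sub_of_le hy]
      calc δ / 2 * (exp (y - x) * (u y ^ 2 + 2 * (u y * u' y)))
          = exp (y - x) / 2 * (δ * (u y ^ 2 + 2 * (u y * u' y))) := by ring
        _ ≤ _ := mul_le_mul_of_nonneg_left (mul_sq_add_two_mul_le hγ hkey _ _) (by positivity)

lemma mul_sq_le_setIntegral_Ioi_p_sub_mul (x : ℝ) :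
    δ / 2 * u x ^ 2 ≤ ∫ y in Ioi x, p (x - y) * ((3 - γ) / 2 * u y ^ 2 + γ / 2 * u' y ^ 2) := by
  have hint := (hu_sq.sub (huu'.const_mul 2)).integrableOn_Ioi_exp_sub_mul x
  calc δ / 2 * u x ^ 2
      = ∫ y in Ioi x, δ / 2 * (exp (x - y) * (u y ^ 2 - 2 * (u y * u' y))) := by
        rw [integral_const_mul, integral_Ioi_exp_sub_mul hu hu_sq huu']
    _ ≤ _ := by
      refine setIntegral_mono_on (hint.const_mul _) (hF.p_sub_mul x).integrableOn
        measurableSet_Ioi fun y hy => ?_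
      rw [p_sub_of_ge hy.le]
      have h := mul_sq_add_two_mul_le hγ hkey (u y) (-u' y)
      rw [neg_sq, mul_neg, mul_neg, ← sub_eq_add_neg] at h
      calc δ / 2 * (exp (x - y) * (u y ^ 2 - 2 * (u y * u' y)))
          = exp (x - y) / 2 * (δ * (u y ^ 2 - 2 * (u y * u' y))) := by ring
        _ ≤ _ := mul_le_mul_of_nonneg_left h (by positivity)

end KernelBound

theorem zhou_inequality
    (γ : ℝ) (hγ0 : 0 < γ) (hγ4 : γ ≤ 4)
    (δ : ℝ) (hδ : δ = (Real.sqrt γ / 4) * (Real.sqrt (12 - 3*γ) - Real.sqrt γ))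
    (u : ℝ → ℝ) (hu : Differentiable ℝ u)
    (hu2 : MemLp u 2 volume) (hu'2 : MemLp (deriv u) 2 volume) :
    ∀ x : ℝ,
      (∫ y, p (x - y) * ((3 - γ)/2 * u y^2 + (γ/2) * deriv u y^2)) ≥ δ * u x^2 := by
  intro x
  have hkey := four_mul_sq_add_two_mul_mul_eq hγ0.le hγ4 hδ
  have hderiv : ∀ y, HasDerivAt u (deriv u y) y := fun y => (hu y).hasDerivAt
  have huu' : Integrable fun y => u y * deriv u y := hu2.integrable_mul hu'2
  have hF : Integrable fun y => (3 - γ) / 2 * u y ^ 2 + γ / 2 * deriv u y ^ 2 :=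
    (hu2.integrable_sq.const_mul _).add (hu'2.integrable_sq.const_mul _)
  have hpF := hF.p_sub_mul x
  rw [ge_iff_le, ← intervalIntegral.integral_Iic_add_Ioi hpF.integrableOn hpF.integrableOn]
  calc δ * u x ^ 2 = δ / 2 * u x ^ 2 + δ / 2 * u x ^ 2 := by ring
    _ ≤ _ := add_le_add
      (mul_sq_le_setIntegral_Iic_p_sub_mul hγ0 hkey hderiv hu2.integrable_sq huu' hF x)
      (mul_sq_le_setIntegral_Ioi_p_sub_mul hγ0 hkey hderiv hu2.integrable_sq huu' hF x)
end

section
/- Let γ ∈ (0,3) and a > 0 be the positive root of a² + a = (3-γ)/γ. Define u(x) = e^{-a|x|}. Then equality holds at x = 0 in the inequality (p * ((3-γ)/2 · u² + (γ/2)(u')²))(0) = δ u(0)², where δ = (√γ/4)(√(12-3γ) - √γ) and p(x) = (1/2)e^{-|x|}. -/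
/-!
For `u = e^{-a|x|}` we have `u'² = a² u²` off `0`, so `(p * (c u² + d u'²))(0)` equals
`(c + d a²)/2 · ∫ e^{-(1+2a)|y|} dy = (c + d a²)/(1 + 2a)`. With `c = (3-γ)/2`, `d = γ/2` and
`a² + a = (3-γ)/γ` the numerator is `(γ/2) a (1 + 2a)`, so the value is `γ a / 2 = δ`.
-/

open MeasureTheory Real

lemma integral_exp_neg_mul_abs {b : ℝ} (hb : 0 < b) :
    ∫ y : ℝ, exp (-b * |y|) = 2 / b := by
  rw [integral_comp_abs (f := fun y ↦ exp (-b * y)), integral_exp_mul_Ioi (neg_neg_of_pos hb)]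
  field_simp
  simp

lemma sign_sq_ae_eq_one : ∀ᵐ y : ℝ, Real.sign y ^ 2 = 1 := by
  filter_upwards [volume.ae_ne 0] with y hy
  rcases sign_apply_eq_of_ne_zero y hy with h | h <;> simp [h]

lemma integral_p_mul_energy_exp_neg_abs {a : ℝ} (ha : 0 < 1 + 2 * a) (c d : ℝ) :
    ∫ y, p (0 - y) * (c * exp (-a * |y|) ^ 2 + d * (-a * Real.sign y * exp (-a * |y|)) ^ 2)
      = (c + d * a ^ 2) / (1 + 2 * a) := by
  have hexp : ∀ y : ℝ, exp (-|y|) * exp (-a * |y|) ^ 2 = exp (-(1 + 2 * a) * |y|) := by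
    intro y
    rw [sq, ← exp_add, ← exp_add]
    ring_nf
  have hintegrand : (fun y ↦ p (0 - y) * (c * exp (-a * |y|) ^ 2
      + d * (-a * Real.sign y * exp (-a * |y|)) ^ 2))
      =ᵐ[volume] fun y ↦ (c + d * a ^ 2) / 2 * exp (-(1 + 2 * a) * |y|) := by
    filter_upwards [sign_sq_ae_eq_one] with y hy
    rw [← hexp, p, zero_sub, abs_neg]
    linear_combination (d * a ^ 2 * exp (-|y|) * exp (-a * |y|) ^ 2 / 2) * hy
  rw [integral_congr_ae hintegrand, integral_const_mul, integral_exp_neg_mul_abs ha]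
  field_simp

section OptimalExponent

variable {γ a : ℝ} (hγ0 : 0 < γ) (hγ4 : γ < 4) (ha : a = (-1 + √((12 - 3 * γ) / γ)) / 2)
include hγ0 hγ4 ha

lemma one_add_two_mul_pos_of_eq : 0 < 1 + 2 * a := by
  rw [ha]
  have : 0 < √((12 - 3 * γ) / γ) := sqrt_pos.2 (div_pos (by linarith) hγ0)
  linarith

lemma mul_sq_add_self_of_eq : γ * (a ^ 2 + a) = 3 - γ := by
  have hsq : γ * √((12 - 3 * γ) / γ) ^ 2 = 12 - 3 * γ := by
    rw [sq_sqrt (div_nonneg (by linarith) hγ0.le)]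
    field_simp
  rw [ha]
  linear_combination hsq / 4

lemma half_mul_eq_of_eq : γ * a / 2 = √γ / 4 * (√(12 - 3 * γ) - √γ) := by
  have hs : √γ ^ 2 = γ := sq_sqrt hγ0.le
  rw [ha, sqrt_div (by linarith)]
  generalize √(12 - 3 * γ) = t
  field_simp
  linear_combination (4 * √γ - 4 * t) * hs

end OptimalExponent

theorem optimality_delta (γ : ℝ) (hγ0 : 0 < γ) (hγ3 : γ < 3)
    (δ : ℝ) (hδ : δ = (Real.sqrt γ / 4) * (Real.sqrt (12 - 3*γ) - Real.sqrt γ))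
    (a : ℝ) (ha : a = (-1 + Real.sqrt ((12 - 3*γ)/γ)) / 2)
    (u u' : ℝ → ℝ)
    (hu : ∀ x, u x = Real.exp (-a * |x|))
    (hu' : ∀ x, u' x = -a * Real.sign x * Real.exp (-a * |x|)) :
    (∫ y, p (0 - y) * ((3 - γ)/2 * u y^2 + (γ/2) * u' y^2)) = δ * u 0^2 := by
  have hγ4 : γ < 4 := by linarith
  have hpos := one_add_two_mul_pos_of_eq hγ0 hγ4 ha
  simp only [hu, hu', integral_p_mul_energy_exp_neg_abs hpos, abs_zero, mul_zero, exp_zero,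
    one_pow, mul_one, hδ, ← half_mul_eq_of_eq hγ0 hγ4 ha]
  rw [div_eq_iff hpos.ne']
  linear_combination (-1 / 2) * mul_sq_add_self_of_eq hγ0 hγ4 ha
end
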